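/- arXiv:2012.02843 — 6 statements merged into one kernel-verified Lean document; each statement's English description precedes it below -/
import Mathlib

section
/- Let d ≥ 3 and p > d. There exists a constant C > 0 depending only on d and p such that for every measurable vector field b : ℝ^d → ℝ^d with |b| ∈ L^p(ℝ^d) and every h > 0, the elliptic Nash norm satisfies n_e(b,h) ≤ C · (2p/(p−d)) · h^{(p−d)/(2p)} · ‖|b|‖_{L^p}. In particular, every vector field with |b| ∈ L^p(ℝ^d), p > d, belongs to the Nash class N_e. -/
open MeasureTheory ENNReal

noncomputable section

/-- `ℝ^d` as a Euclidean space. -/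
abbrev E (d : ℕ) := EuclideanSpace ℝ (Fin d)

/-- The Gaussian kernel `k_μ(t,x) = (4πμt)^{-d/2} exp(-|x|²/(4μt))`. -/
def gaussK (d : ℕ) (μ t : ℝ) (x : E d) : ℝ :=
  (4 * Real.pi * μ * t) ^ (-(d : ℝ) / 2) * Real.exp (-‖x‖ ^ 2 / (4 * μ * t))

/-- The heat semigroup `e^{tΔ}` applied to a nonnegative (extended-real valued)
function `g`, with values in `[0,∞]`. -/
def heatSem (d : ℕ) (t : ℝ) (g : E d → ℝ≥0∞) (x : E d) : ℝ≥0∞ :=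
  ∫⁻ y, ENNReal.ofReal (gaussK d 1 t (x - y)) * g y

/-- `|b|²` as an `ℝ≥0∞`-valued function. -/
def bsq (d : ℕ) (b : E d → E d) : E d → ℝ≥0∞ := fun y => ENNReal.ofReal (‖b y‖ ^ 2)

/-- The elliptic Nash norm `n_e(b,h)`. -/
def nashNorm (d : ℕ) (b : E d → E d) (h : ℝ) : ℝ≥0∞ :=
  ⨆ x : E d, ∫⁻ t in Set.Ioc (0 : ℝ) h,
    (heatSem d t (bsq d b) x) ^ (1 / 2 : ℝ) * ENNReal.ofReal (t ^ (-(1 : ℝ) / 2))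

/-!
For fixed `t > 0` and `x`, `e^{tΔ}` is integration against the probability measure
`ν = k_t(x - ·) dy`, whose density is at most `(4πt)^{-d/2}`. Since `p ≥ 2`,
`√(e^{tΔ}|b|²(x)) = ‖b‖_{L²(ν)} ≤ ‖b‖_{L^p(ν)} ≤ (4πt)^{-d/(2p)} ‖b‖_{L^p}`, and
`t ↦ t^{-d/(2p) - 1/2}` is integrable at `0` because `p > d`.
-/

open Real

section HeatKernel

variable {d : ℕ} {t : ℝ}

lemma gaussK_one_eq (d : ℕ) (t : ℝ) (z : E d) :
    gaussK d 1 t z = (4 * π * t) ^ (-(d : ℝ) / 2) * rexp (-(1 / (4 * t)) * ‖z‖ ^ 2) := by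
  rw [gaussK]
  ring_nf

@[fun_prop]
lemma measurable_gaussK (d : ℕ) (μ t : ℝ) : Measurable (gaussK d μ t) := by
  unfold gaussK; fun_prop

lemma gaussK_one_le (ht : 0 < t) (z : E d) : gaussK d 1 t z ≤ (4 * π * t) ^ (-(d : ℝ) / 2) := by
  rw [gaussK_one_eq]
  refine mul_le_of_le_one_right (by positivity) (exp_le_one_iff.2 ?_)
  have : 0 ≤ 1 / (4 * t) * ‖z‖ ^ 2 := by positivity
  linarith

lemma integral_gaussK_one (ht : 0 < t) : ∫ z : E d, gaussK d 1 t z = 1 := by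
  have hb : 0 < 1 / (4 * t) := by positivity
  simp only [gaussK_one_eq]
  rw [integral_const_mul, GaussianFourier.integral_rexp_neg_mul_sq_norm hb,
    finrank_euclideanSpace_fin, one_div, div_inv_eq_mul, neg_div, rpow_neg (by positivity),
    show π * (4 * t) = 4 * π * t by ring, inv_mul_cancel₀ (by positivity)]

lemma lintegral_ofReal_gaussK_one (ht : 0 < t) :
    ∫⁻ z : E d, ENNReal.ofReal (gaussK d 1 t z) = 1 := by
  have hint : Integrable (gaussK d 1 t) :=
    .of_integral_ne_zero (by rw [integral_gaussK_one ht]; exact one_ne_zero)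
  rw [← ofReal_integral_eq_lintegral_ofReal hint
    (Filter.Eventually.of_forall fun z => by rw [Pi.zero_apply, gaussK_one_eq]; positivity),
    integral_gaussK_one ht, ENNReal.ofReal_one]

end HeatKernel

def heatKernelMeasure (d : ℕ) (t : ℝ) (x : E d) : Measure (E d) :=
  volume.withDensity fun y => ENNReal.ofReal (gaussK d 1 t (x - y))

section HeatKernelMeasure

variable {d : ℕ} {t : ℝ}

lemma isProbabilityMeasure_heatKernelMeasure (ht : 0 < t) (x : E d) :
    IsProbabilityMeasure (heatKernelMeasure d t x) := by
  constructor
  rw [heatKernelMeasure, withDensity_apply _ MeasurableSet.univ, Measure.restrict_univ,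
    (Measure.measurePreserving_sub_left volume x).lintegral_comp
      (measurable_gaussK d 1 t).ennreal_ofReal, lintegral_ofReal_gaussK_one ht]

lemma heatKernelMeasure_le_smul_volume (ht : 0 < t) (x : E d) :
    heatKernelMeasure d t x ≤ ENNReal.ofReal ((4 * π * t) ^ (-(d : ℝ) / 2)) • volume := by
  rw [← withDensity_const]
  exact withDensity_mono (ae_of_all _ fun y => ENNReal.ofReal_le_ofReal (gaussK_one_le ht _))

lemma heatSem_eq_lintegral (g : E d → ℝ≥0∞) (x : E d) :
    heatSem d t g x = ∫⁻ y, g y ∂heatKernelMeasure d t x := by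
  rw [heatKernelMeasure, lintegral_withDensity_eq_lintegral_mul_non_measurable _
    (by fun_prop) (ae_of_all _ fun _ => ENNReal.ofReal_lt_top)]
  rfl

lemma heatSem_bsq_rpow_half (b : E d → E d) (x : E d) :
    heatSem d t (bsq d b) x ^ (1 / 2 : ℝ) = eLpNorm b 2 (heatKernelMeasure d t x) := by
  rw [heatSem_eq_lintegral, eLpNorm_eq_lintegral_rpow_enorm_toReal two_ne_zero ofNat_ne_top]
  simp only [bsq, ENNReal.toReal_ofNat, ENNReal.ofReal_pow (norm_nonneg _), ofReal_norm,
    ENNReal.rpow_two]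

lemma heatSem_bsq_rpow_half_le (ht : 0 < t) {p : ℝ} (hp : 2 ≤ p) {b : E d → E d}
    (hb : AEStronglyMeasurable b) (x : E d) :
    heatSem d t (bsq d b) x ^ (1 / 2 : ℝ) ≤
      ENNReal.ofReal ((4 * π * t) ^ (-(d : ℝ) / (2 * p))) * eLpNorm b (ENNReal.ofReal p) := by
  have := isProbabilityMeasure_heatKernelMeasure ht x
  have hp0 : 0 < p := by linarith
  calc heatSem d t (bsq d b) x ^ (1 / 2 : ℝ) = eLpNorm b 2 (heatKernelMeasure d t x) :=
        heatSem_bsq_rpow_half b x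
    _ ≤ eLpNorm b (ENNReal.ofReal p) (heatKernelMeasure d t x) :=
        eLpNorm_le_eLpNorm_of_exponent_le (by simpa using ENNReal.ofReal_le_ofReal hp)
          (hb.mono_ac (withDensity_absolutelyContinuous _ _))
    _ ≤ eLpNorm b (ENNReal.ofReal p) (ENNReal.ofReal ((4 * π * t) ^ (-(d : ℝ) / 2)) • volume) :=
        eLpNorm_mono_measure _ (heatKernelMeasure_le_smul_volume ht x)
    _ = _ := by
        rw [eLpNorm_smul_measure_of_ne_top ofReal_ne_top, smul_eq_mul, one_div, ENNReal.toReal_inv,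
          ENNReal.toReal_ofReal hp0.le, ENNReal.ofReal_rpow_of_nonneg (by positivity)
          (by positivity), ← rpow_mul (by positivity)]
        congr 3
        ring

lemma heatSem_bsq_rpow_half_mul_le (ht : 0 < t) {p : ℝ} (hp : 2 ≤ p)
    {b : E d → E d} (hb : AEStronglyMeasurable b) (x : E d) :
    heatSem d t (bsq d b) x ^ (1 / 2 : ℝ) * ENNReal.ofReal (t ^ (-(1 : ℝ) / 2)) ≤
      ENNReal.ofReal ((4 * π) ^ (-(d : ℝ) / (2 * p)) * t ^ (-(d : ℝ) / (2 * p) + -1 / 2)) *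
        eLpNorm b (ENNReal.ofReal p) := by
  calc _ ≤ ENNReal.ofReal ((4 * π * t) ^ (-(d : ℝ) / (2 * p))) * eLpNorm b (ENNReal.ofReal p)
          * ENNReal.ofReal (t ^ (-(1 : ℝ) / 2)) := by
        gcongr
        exact heatSem_bsq_rpow_half_le ht hp hb x
    _ = _ := by
        rw [mul_right_comm, ← ENNReal.ofReal_mul (by positivity), mul_rpow (by positivity) ht.le,
          mul_assoc, ← rpow_add ht]

end HeatKernelMeasure

lemma lintegral_Ioc_ofReal_rpow {r h : ℝ} (hr : -1 < r) (hh : 0 ≤ h) :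
    ∫⁻ t in Set.Ioc 0 h, ENNReal.ofReal (t ^ r) = ENNReal.ofReal (h ^ (r + 1) / (r + 1)) := by
  rw [← ofReal_integral_eq_lintegral_ofReal (intervalIntegral.intervalIntegrable_rpow' hr).1
    ((ae_restrict_iff' measurableSet_Ioc).2 (ae_of_all _ fun t ht => rpow_nonneg ht.1.le r)),
    ← intervalIntegral.integral_of_le hh, integral_rpow (Or.inl hr), zero_rpow (by linarith),
    sub_zero]

/-- For `d ≥ 3` and `p > d` there is a constant `C > 0` depending only on
`d` and `p` such that for every measurable vector field `b` with `|b| ∈ L^p` and every `h > 0`,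
`n_e(b,h) ≤ C · (2p/(p−d)) · h^{(p−d)/(2p)} · ‖b‖_{L^p}`; in particular every such `b`
belongs to the Nash class `N_e`. -/
theorem nash_norm_of_Lp (d : ℕ) (hd : 3 ≤ d) (p : ℝ) (hp : (d : ℝ) < p) :
    ∃ C > (0 : ℝ), ∀ b : E d → E d, Measurable b →
      MemLp b (ENNReal.ofReal p) volume → ∀ h > (0 : ℝ),
        nashNorm d b h ≤
          ENNReal.ofReal (C * (2 * p / (p - d)) * h ^ ((p - d) / (2 * p)))
            * eLpNorm b (ENNReal.ofReal p) volume
        ∧ nashNorm d b h < ⊤ := by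
  have hp2 : 2 ≤ p := by linarith [show (3 : ℝ) ≤ d by exact_mod_cast hd]
  set C := (4 * π) ^ (-(d : ℝ) / (2 * p))
  have hC : 0 < C := rpow_pos_of_pos (by positivity) _
  set r := -(d : ℝ) / (2 * p) + -1 / 2
  have hr : r + 1 = (p - d) / (2 * p) := by simp only [r]; field_simp; ring
  have hr0 : 0 < r + 1 := hr ▸ div_pos (by linarith) (by linarith)
  refine ⟨C, hC, fun b _ hb h hh => ?_⟩
  set N := eLpNorm b (ENNReal.ofReal p)
  have hbound : nashNorm d b h ≤
      ENNReal.ofReal (C * (2 * p / (p - d)) * h ^ ((p - d) / (2 * p))) * N := iSup_le fun x => calc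
    _ ≤ ∫⁻ t in Set.Ioc 0 h, ENNReal.ofReal (C * t ^ r) * N :=
        setLIntegral_mono' measurableSet_Ioc fun t ht =>
          heatSem_bsq_rpow_half_mul_le ht.1 hp2 hb.1 x
    _ = ENNReal.ofReal C * ENNReal.ofReal (h ^ (r + 1) / (r + 1)) * N := by
        simp only [ENNReal.ofReal_mul hC.le]
        rw [lintegral_mul_const' _ _ hb.eLpNorm_ne_top, lintegral_const_mul' _ _ ofReal_ne_top,
          lintegral_Ioc_ofReal_rpow (by linarith) hh.le]
    _ = _ := by
        rw [← ENNReal.ofReal_mul hC.le, hr]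
        congr 2
        field_simp
  exact ⟨hbound, hbound.trans_lt (mul_lt_top ofReal_lt_top hb.eLpNorm_lt_top)⟩
end
end

section
/- Let d ≥ 1, let 0 < 2δ < λ, let 0 < ε < 1, and let s < τ < t be real numbers with 0 < τ − s < (t − s)ε. Set c₋ := (1−ε)^{-d/2} (λ/(λ−2δ))^{d/4}. Then for all x, y, z ∈ ℝ^d: k_λ(t−τ, x−z)² · k_δ(τ−s, y−z) ≤ c₋² · k_{λδ/(λ−2δ)}(τ−s, y−z) · k_λ(t−s, x−y)². -/
open MeasureTheory ENNReal

noncomputable section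

/-!
Write `A = t - τ`, `B = τ - s` and `μ = λδ/(λ - 2δ)`, so that `1/δ = 1/μ + 2/λ`. Then
`k_δ(B, v) = (λ/(λ - 2δ))^{d/2} k_μ(B, v) exp(-|v|²/(2λB))` exactly, and the leftover factor
`exp(-|v|²/(2λB))` is absorbed by `k_λ(A, u)²`: by Sedrakyan's inequality
`(p + q)²/(A + B) ≤ p²/A + q²/B` and the triangle inequality,
`k_λ(A, u)² exp(-|v|²/(2λB)) ≤ ((A + B)/A)^d k_λ(A + B, u - v)²`.
Finally `τ - s < (t - s)ε` means `(A + B)/A ≤ (1 - ε)⁻¹`.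
-/

theorem sq_add_div_add_le {p q A B : ℝ} (hA : 0 < A) (hB : 0 < B) :
    (p + q) ^ 2 / (A + B) ≤ p ^ 2 / A + q ^ 2 / B := by
  simpa [Fin.sum_univ_two] using
    Finset.sq_sum_div_le_sum_sq_div Finset.univ ![p, q] (g := ![A, B])
      (by simp [Fin.forall_fin_two, hA, hB])

theorem gaussK_nonneg {d : ℕ} {μ t : ℝ} (hμ : 0 ≤ μ) (ht : 0 ≤ t) (x : E d) :
    0 ≤ gaussK d μ t x := by
  unfold gaussK
  positivity

theorem gaussK_eq_mul_gaussK_mul_exp {d : ℕ} {δ lam B : ℝ} (hδ : 0 < δ) (hdl : 2 * δ < lam)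
    (hB : 0 < B) (v : E d) :
    gaussK d δ B v = (lam / (lam - 2 * δ)) ^ ((d : ℝ) / 2)
      * gaussK d (lam * δ / (lam - 2 * δ)) B v * Real.exp (-‖v‖ ^ 2 / (2 * lam * B)) := by
  have hl2 : 0 < lam - 2 * δ := by linarith
  have hl : 0 < lam := by linarith
  have hpref : (4 * Real.pi * δ * B) ^ (-(d : ℝ) / 2) = (lam / (lam - 2 * δ)) ^ ((d : ℝ) / 2)
      * (4 * Real.pi * (lam * δ / (lam - 2 * δ)) * B) ^ (-(d : ℝ) / 2) := by
    have hscale : 4 * Real.pi * (lam * δ / (lam - 2 * δ)) * B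
        = lam / (lam - 2 * δ) * (4 * Real.pi * δ * B) := by ring
    have hr : 0 < lam / (lam - 2 * δ) := by positivity
    rw [hscale, Real.mul_rpow hr.le (by positivity), neg_div, Real.rpow_neg hr.le,
      mul_inv_cancel_left₀ (Real.rpow_pos_of_pos hr _).ne']
  have hexp : -‖v‖ ^ 2 / (4 * δ * B)
      = -‖v‖ ^ 2 / (4 * (lam * δ / (lam - 2 * δ)) * B) + -‖v‖ ^ 2 / (2 * lam * B) := by
    field_simp
    ring
  unfold gaussK
  rw [hpref, hexp, Real.exp_add]
  ring

theorem gaussK_sq_mul_exp_le {d : ℕ} {lam A B : ℝ} (hl : 0 < lam) (hA : 0 < A) (hB : 0 < B)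
    (u v : E d) :
    gaussK d lam A u ^ 2 * Real.exp (-‖v‖ ^ 2 / (2 * lam * B))
      ≤ (((A + B) / A) ^ ((d : ℝ) / 2)) ^ 2 * gaussK d lam (A + B) (u - v) ^ 2 := by
  have hexp : -‖u‖ ^ 2 / (2 * lam * A) + -‖v‖ ^ 2 / (2 * lam * B)
      ≤ -‖u - v‖ ^ 2 / (2 * lam * (A + B)) := by
    have huv : ‖u - v‖ ^ 2 / (A + B) ≤ ‖u‖ ^ 2 / A + ‖v‖ ^ 2 / B :=
      (div_le_div_of_nonneg_right (pow_le_pow_left₀ (norm_nonneg _) (norm_sub_le u v) 2)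
        (by positivity)).trans (sq_add_div_add_le hA hB)
    have h2l : 0 < 2 * lam := by positivity
    calc -‖u‖ ^ 2 / (2 * lam * A) + -‖v‖ ^ 2 / (2 * lam * B)
        = -(‖u‖ ^ 2 / A + ‖v‖ ^ 2 / B) / (2 * lam) := by field_simp; ring
      _ ≤ -(‖u - v‖ ^ 2 / (A + B)) / (2 * lam) := by gcongr
      _ = -‖u - v‖ ^ 2 / (2 * lam * (A + B)) := by field_simp
  have hpref : (4 * Real.pi * lam * A) ^ (-(d : ℝ) / 2)
      = ((A + B) / A) ^ ((d : ℝ) / 2) * (4 * Real.pi * lam * (A + B)) ^ (-(d : ℝ) / 2) := by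
    have hratio : (A + B) / A = (4 * Real.pi * lam * (A + B)) / (4 * Real.pi * lam * A) := by
      field_simp
    rw [hratio, Real.div_rpow (by positivity) (by positivity), neg_div,
      Real.rpow_neg (by positivity), Real.rpow_neg (by positivity)]
    field_simp
  have hsq_exp : ∀ (w : E d) (T : ℝ), Real.exp (-‖w‖ ^ 2 / (4 * lam * T)) ^ 2
      = Real.exp (-‖w‖ ^ 2 / (2 * lam * T)) := fun w T => by
    rw [← Real.exp_nat_mul]; ring_nf
  unfold gaussK
  rw [hpref, mul_pow _ (Real.exp _), mul_pow _ (Real.exp _), hsq_exp, hsq_exp, mul_assoc,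
    ← Real.exp_add, ← mul_assoc, ← mul_pow]
  gcongr

theorem add_div_rpow_le_one_sub_rpow_neg {A B ε e : ℝ} (hA : 0 < A) (hB : 0 ≤ B) (hε : ε < 1)
    (he : 0 ≤ e) (hBε : B < (A + B) * ε) : ((A + B) / A) ^ e ≤ (1 - ε) ^ (-e) := by
  have hε' : 0 < 1 - ε := by linarith
  rw [Real.rpow_neg hε'.le, ← Real.inv_rpow hε'.le]
  gcongr
  rw [div_le_iff₀ hA, inv_mul_eq_div, le_div_iff₀ hε']
  linarith

theorem gauss_a4_minus_general (d : ℕ) (δ lam ε s τ t : ℝ)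
    (hδ : 0 < 2 * δ) (hdl : 2 * δ < lam) (hε1 : ε < 1)
    (hsτ : s < τ) (hτt : τ < t) (hτs : τ - s < (t - s) * ε) (x y z : E d) :
    gaussK d lam (t - τ) (x - z) ^ 2 * gaussK d δ (τ - s) (y - z)
      ≤ ((1 - ε) ^ (-(d : ℝ) / 2) * (lam / (lam - 2 * δ)) ^ ((d : ℝ) / 4)) ^ 2
        * gaussK d (lam * δ / (lam - 2 * δ)) (τ - s) (y - z)
        * gaussK d lam (t - s) (x - y) ^ 2 := by
  have hA : 0 < t - τ := by linarith
  have hB : 0 < τ - s := by linarith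
  have hδ0 : 0 < δ := by linarith
  have hl : 0 < lam := by linarith
  have hr : 0 < lam / (lam - 2 * δ) := div_pos hl (by linarith)
  have hconst : ((1 - ε) ^ (-(d : ℝ) / 2) * (lam / (lam - 2 * δ)) ^ ((d : ℝ) / 4)) ^ 2
      = ((1 - ε) ^ (-(d : ℝ) / 2)) ^ 2 * (lam / (lam - 2 * δ)) ^ ((d : ℝ) / 2) := by
    rw [mul_pow, ← Real.rpow_mul_natCast hr.le]
    ring_nf
  have htime : ((t - τ + (τ - s)) / (t - τ)) ^ ((d : ℝ) / 2) ≤ (1 - ε) ^ (-(d : ℝ) / 2) := by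
    rw [neg_div]
    exact add_div_rpow_le_one_sub_rpow_neg hA hB.le hε1 (by positivity) (by linarith)
  set μ := lam * δ / (lam - 2 * δ)
  have hμ : 0 ≤ μ := by positivity
  rw [gaussK_eq_mul_gaussK_mul_exp hδ0 hdl hB, hconst,
    show x - y = (x - z) - (y - z) by abel, show t - s = t - τ + (τ - s) by ring]
  calc _ = (lam / (lam - 2 * δ)) ^ ((d : ℝ) / 2) * gaussK d μ (τ - s) (y - z)
          * (gaussK d lam (t - τ) (x - z) ^ 2
            * Real.exp (-‖y - z‖ ^ 2 / (2 * lam * (τ - s)))) := by ring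
    _ ≤ (lam / (lam - 2 * δ)) ^ ((d : ℝ) / 2) * gaussK d μ (τ - s) (y - z)
          * (((1 - ε) ^ (-(d : ℝ) / 2)) ^ 2
            * gaussK d lam (t - τ + (τ - s)) (x - z - (y - z)) ^ 2) := by
      refine mul_le_mul_of_nonneg_left ?_
        (mul_nonneg (by positivity) (gaussK_nonneg hμ hB.le _))
      exact (gaussK_sq_mul_exp_le hl hA hB _ _).trans (by gcongr)
    _ = _ := by ring

/-- (`a₄⁻`) For `0 < 2δ < λ`, `0 < ε < 1`, `s < τ < t` with
`τ − s < (t − s)ε` and `c₋ = (1−ε)^{-d/2}(λ/(λ−2δ))^{d/4}`: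
`k_λ(t−τ,x−z)² k_δ(τ−s,y−z) ≤ c₋² k_{λδ/(λ−2δ)}(τ−s,y−z) k_λ(t−s,x−y)²`. -/
theorem gauss_a4_minus (d : ℕ) (hd : 1 ≤ d) (δ lam ε s τ t : ℝ)
    (hδ : 0 < 2 * δ) (hdl : 2 * δ < lam) (hε0 : 0 < ε) (hε1 : ε < 1)
    (hsτ : s < τ) (hτt : τ < t) (hτs : τ - s < (t - s) * ε) (x y z : E d) :
    gaussK d lam (t - τ) (x - z) ^ 2 * gaussK d δ (τ - s) (y - z)
      ≤ ((1 - ε) ^ (-(d : ℝ) / 2) * (lam / (lam - 2 * δ)) ^ ((d : ℝ) / 4)) ^ 2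
        * gaussK d (lam * δ / (lam - 2 * δ)) (τ - s) (y - z)
        * gaussK d lam (t - s) (x - y) ^ 2 :=
  gauss_a4_minus_general d δ lam ε s τ t hδ hdl hε1 hsτ hτt hτs x y z
end
end

section
/- Let d ≥ 1 and let b : ℝ^d → ℝ^d be a measurable vector field that is form-bounded with respect to −Δ: there are constants β > 0 and c ≥ 0 such that ∫_{ℝ^d} |b(x)|² f(x)² dx ≤ β ∫_{ℝ^d} |∇f(x)|² dx + c ∫_{ℝ^d} f(x)² dx for every f ∈ W^{1,2}(ℝ^d). Then for every t > 0 and every x ∈ ℝ^d, e^{tΔ}|b|²(x) ≤ βd/(8t) + c. -/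
open MeasureTheory ENNReal

noncomputable section

/-!
Test the form bound with the square root of the heat kernel centred at `x`,
`f = k_t(· - x)^{1/2}`: then `|b|² f²` integrates to `e^{tΔ}|b|²(x)`, `∫ f² = 1`, and
`∇f(y) = -(y - x) f(y) / (4t)`, so `∫ |∇f|² = (4t)⁻² ∫ |y|² k_t(y) dy = 2dt / (16t²) = d / (8t)`.
-/

open Real Set

theorem integral_rpow_add_two_mul_exp_neg_mul_sq {b s : ℝ} (hb : 0 < b) (hs : -1 < s) :
    ∫ r in Ioi (0 : ℝ), r ^ (s + 2) * exp (-b * r ^ 2) =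
      (s + 1) / (2 * b) * ∫ r in Ioi (0 : ℝ), r ^ s * exp (-b * r ^ 2) := by
  simp_rw [← Real.rpow_two]
  rw [integral_rpow_mul_exp_neg_mul_rpow two_pos (by linarith) hb,
    integral_rpow_mul_exp_neg_mul_rpow two_pos hs hb,
    show (s + 2 + 1) / 2 = (s + 1) / 2 + 1 by ring, Gamma_add_one (by linarith),
    show -(s + 2 + 1) / 2 = -(s + 1) / 2 + -1 by ring, rpow_add hb, Real.rpow_neg_one]
  field_simp

section GaussianMoment

variable {V : Type*} [NormedAddCommGroup V] [InnerProductSpace ℝ V] [FiniteDimensional ℝ V]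
  [MeasurableSpace V] [BorelSpace V]

theorem integrable_exp_neg_mul_sq_norm {b : ℝ} (hb : 0 < b) :
    Integrable fun v : V => exp (-b * ‖v‖ ^ 2) := by
  simpa [Complex.norm_exp, ← Complex.ofReal_pow] using
    (GaussianFourier.integrable_cexp_neg_mul_sq_norm_add (V := V) (b := b) hb 0 0).norm

theorem integrable_sq_norm_mul_exp_neg_mul_sq_norm {b : ℝ} (hb : 0 < b) :
    Integrable fun v : V => ‖v‖ ^ 2 * exp (-b * ‖v‖ ^ 2) := by
  rcases subsingleton_or_nontrivial V with hV | hV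
  · simp [Subsingleton.elim _ (0 : V)]
  refine (integrable_fun_norm_addHaar volume (f := fun r => r ^ 2 * exp (-b * r ^ 2))).2 ?_
  refine (integrableOn_rpow_mul_exp_neg_mul_sq hb (s := (Module.finrank ℝ V - 1 : ℕ) + 2)
    (neg_one_lt_zero.trans_le (by positivity))).congr_fun
    (fun r (hr : 0 < r) => ?_) measurableSet_Ioi
  simp only [rpow_add hr, Real.rpow_natCast, smul_eq_mul, Real.rpow_two]
  ring

theorem integral_sq_norm_mul_exp_neg_mul_sq_norm {b : ℝ} (hb : 0 < b) :
    ∫ v : V, ‖v‖ ^ 2 * exp (-b * ‖v‖ ^ 2) =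
      Module.finrank ℝ V / (2 * b) * ∫ v : V, exp (-b * ‖v‖ ^ 2) := by
  rcases subsingleton_or_nontrivial V with hV | hV
  · simp [Subsingleton.elim _ (0 : V), Module.finrank_zero_of_subsingleton]
  rw [integral_fun_norm_addHaar volume (fun r => r ^ 2 * exp (-b * r ^ 2)),
    integral_fun_norm_addHaar volume (fun r => exp (-b * r ^ 2))]
  set n := Module.finrank ℝ V
  have hn : ((n - 1 : ℕ) : ℝ) + 1 = n := by
    rw [Nat.cast_sub Module.finrank_pos, Nat.cast_one, sub_add_cancel]
  have hrad := integral_rpow_add_two_mul_exp_neg_mul_sq hb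
    (s := (n - 1 : ℕ)) (neg_one_lt_zero.trans_le (by positivity))
  rw [hn] at hrad
  have hlhs : ∫ r in Ioi (0 : ℝ), r ^ (n - 1) • (r ^ 2 * exp (-b * r ^ 2)) =
      ∫ r in Ioi (0 : ℝ), r ^ (((n - 1 : ℕ) : ℝ) + 2) * exp (-b * r ^ 2) :=
    setIntegral_congr_fun measurableSet_Ioi fun r (hr : 0 < r) => by
      simp only [rpow_add hr, Real.rpow_natCast, smul_eq_mul, Real.rpow_two]
      ring
  have hrhs : ∫ r in Ioi (0 : ℝ), r ^ (n - 1) • exp (-b * r ^ 2) =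
      ∫ r in Ioi (0 : ℝ), r ^ ((n - 1 : ℕ) : ℝ) * exp (-b * r ^ 2) :=
    setIntegral_congr_fun measurableSet_Ioi fun r _ => by
      simp only [Real.rpow_natCast, smul_eq_mul]
  rw [hlhs, hrhs, hrad]
  simp only [nsmul_eq_mul, smul_eq_mul]
  ring

end GaussianMoment

section HeatKernel

variable {d : ℕ} {μ t : ℝ}

theorem gaussK_eq (d : ℕ) (μ t : ℝ) (x : E d) :
    gaussK d μ t x = (4 * π * μ * t) ^ (-(d : ℝ) / 2) * exp (-(4 * μ * t)⁻¹ * ‖x‖ ^ 2) := by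
  rw [gaussK]
  congr 2
  ring

theorem integrable_gaussK (hμ : 0 < μ) (ht : 0 < t) : Integrable (gaussK d μ t) := by
  simp_rw [funext (gaussK_eq d μ t)]
  exact (integrable_exp_neg_mul_sq_norm (by positivity)).const_mul _

theorem integrable_sq_norm_mul_gaussK (hμ : 0 < μ) (ht : 0 < t) :
    Integrable fun x : E d => ‖x‖ ^ 2 * gaussK d μ t x := by
  simp_rw [gaussK_eq, mul_left_comm (‖_‖ ^ 2)]
  exact (integrable_sq_norm_mul_exp_neg_mul_sq_norm (by positivity)).const_mul _

theorem integral_gaussK (hμ : 0 < μ) (ht : 0 < t) : ∫ x, gaussK d μ t x = 1 := by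
  simp_rw [gaussK_eq]
  rw [integral_const_mul, GaussianFourier.integral_rexp_neg_mul_sq_norm (by positivity),
    finrank_euclideanSpace_fin, div_inv_eq_mul, show π * (4 * μ * t) = 4 * π * μ * t by ring,
    ← rpow_add (by positivity), neg_div, neg_add_cancel, Real.rpow_zero]

theorem integral_sq_norm_mul_gaussK (hμ : 0 < μ) (ht : 0 < t) :
    ∫ x, ‖x‖ ^ 2 * gaussK d μ t x = 2 * d * μ * t := by
  have hK := integral_gaussK (d := d) hμ ht
  simp_rw [gaussK_eq, mul_left_comm (‖_‖ ^ 2)] at hK ⊢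
  rw [integral_const_mul] at hK
  rw [integral_const_mul, integral_sq_norm_mul_exp_neg_mul_sq_norm (by positivity),
    finrank_euclideanSpace_fin, mul_left_comm, hK]
  field_simp
  ring

end HeatKernel

def gaussKSqrt (d : ℕ) (μ t : ℝ) (x : E d) : ℝ :=
  (4 * π * μ * t) ^ (-(d : ℝ) / 4) * exp (-(8 * μ * t)⁻¹ * ‖x‖ ^ 2)

section HeatKernelSqrt

variable {d : ℕ} {μ t : ℝ}

theorem gaussKSqrt_sq (hμ : 0 < μ) (ht : 0 < t) (x : E d) :
    gaussKSqrt d μ t x ^ 2 = gaussK d μ t x := by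
  rw [gaussKSqrt, gaussK, mul_pow, ← Real.rpow_natCast, ← Real.rpow_mul (by positivity),
    sq, ← exp_add]
  congr 2
  · push_cast; ring
  · ring

theorem contDiff_gaussKSqrt {n : WithTop ℕ∞} : ContDiff ℝ n (gaussKSqrt d μ t) :=
  contDiff_const.mul ((contDiff_const.mul (contDiff_norm_sq ℝ)).exp)

theorem continuous_gaussKSqrt : Continuous (gaussKSqrt d μ t) :=
  (contDiff_gaussKSqrt (n := 0)).continuous

theorem hasGradientAt_gaussKSqrt (x : E d) :
    HasGradientAt (gaussKSqrt d μ t) ((-(4 * μ * t)⁻¹ * gaussKSqrt d μ t x) • x) x := by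
  have h := (((hasStrictFDerivAt_norm_sq x).hasFDerivAt.const_mul (-(8 * μ * t)⁻¹)).exp).const_mul
    ((4 * π * μ * t) ^ (-(d : ℝ) / 4))
  rw [hasGradientAt_iff_hasFDerivAt]
  refine h.congr_fderiv ?_
  ext v
  simp only [gaussKSqrt, map_smul, InnerProductSpace.toDual_apply_apply,
    smul_apply, coe_innerSL_apply, smul_eq_mul, nsmul_eq_mul]
  ring

theorem gradient_gaussKSqrt :
    gradient (gaussKSqrt d μ t) = fun x => (-(4 * μ * t)⁻¹ * gaussKSqrt d μ t x) • x :=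
  gradient_eq hasGradientAt_gaussKSqrt

theorem norm_gradient_gaussKSqrt_sq (hμ : 0 < μ) (ht : 0 < t) (x : E d) :
    ‖gradient (gaussKSqrt d μ t) x‖ ^ 2 = ((4 * μ * t)⁻¹) ^ 2 * (‖x‖ ^ 2 * gaussK d μ t x) := by
  rw [gradient_gaussKSqrt, norm_smul, Real.norm_eq_abs, mul_pow, sq_abs, mul_pow,
    gaussKSqrt_sq hμ ht]
  ring

theorem memLp_gaussKSqrt (hμ : 0 < μ) (ht : 0 < t) : MemLp (gaussKSqrt d μ t) 2 := by
  refine (memLp_two_iff_integrable_sq continuous_gaussKSqrt.aestronglyMeasurable).2 ?_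
  simpa only [gaussKSqrt_sq hμ ht] using integrable_gaussK hμ ht

theorem memLp_gradient_gaussKSqrt (hμ : 0 < μ) (ht : 0 < t) :
    MemLp (gradient (gaussKSqrt d μ t)) 2 := by
  have hcont : Continuous (gradient (gaussKSqrt d μ t)) := by
    rw [gradient_gaussKSqrt]
    exact (continuous_const.mul continuous_gaussKSqrt).smul continuous_id
  refine (memLp_two_iff_integrable_sq_norm hcont.aestronglyMeasurable).2 ?_
  simp_rw [norm_gradient_gaussKSqrt_sq hμ ht]
  exact (integrable_sq_norm_mul_gaussK hμ ht).const_mul _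

theorem integral_gaussKSqrt_sq (hμ : 0 < μ) (ht : 0 < t) :
    ∫ x, gaussKSqrt d μ t x ^ 2 = 1 := by
  simp_rw [gaussKSqrt_sq hμ ht]
  exact integral_gaussK hμ ht

theorem integral_norm_gradient_gaussKSqrt_sq (hμ : 0 < μ) (ht : 0 < t) :
    ∫ x, ‖gradient (gaussKSqrt d μ t) x‖ ^ 2 = d / (8 * μ * t) := by
  simp_rw [norm_gradient_gaussKSqrt_sq hμ ht]
  rw [integral_const_mul, integral_sq_norm_mul_gaussK hμ ht]
  field_simp
  ring

end HeatKernelSqrt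

def IsFormBounded {d : ℕ} (b : E d → E d) (β c : ℝ) : Prop :=
  ∀ f : E d → ℝ, ContDiff ℝ 1 f → MemLp f 2 volume → MemLp (fun x => gradient f x) 2 volume →
    (∫⁻ x, ENNReal.ofReal (‖b x‖ ^ 2 * f x ^ 2))
      ≤ ENNReal.ofReal (β * (∫ x, ‖gradient f x‖ ^ 2) + c * ∫ x, f x ^ 2)

theorem IsFormBounded.lintegral_comp_sub_le {d : ℕ} {b : E d → E d} {β c : ℝ}
    (hb : IsFormBounded b β c) {f : E d → ℝ} (hf : ContDiff ℝ 1 f) (hf₂ : MemLp f 2)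
    (hgrad : MemLp (gradient f) 2) (x₀ : E d) :
    ∫⁻ x, ENNReal.ofReal (‖b x‖ ^ 2 * f (x - x₀) ^ 2)
      ≤ ENNReal.ofReal (β * (∫ x, ‖gradient f x‖ ^ 2) + c * ∫ x, f x ^ 2) := by
  have hgrad_sub : gradient (fun x => f (x - x₀)) = fun x => gradient f (x - x₀) := by
    funext x
    simp [gradient, fderiv_comp_sub]
  have hsub := measurePreserving_sub_right volume x₀
  have h := hb (fun x => f (x - x₀)) (hf.comp (contDiff_id.sub contDiff_const))
    (hf₂.comp_measurePreserving hsub) (by rw [hgrad_sub]; exact hgrad.comp_measurePreserving hsub)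
  rwa [hgrad_sub, integral_sub_right_eq_self (fun x => ‖gradient f x‖ ^ 2),
    integral_sub_right_eq_self (fun x => f x ^ 2)] at h

theorem heat_of_form_bounded_general (d : ℕ) (b : E d → E d)
    (β c : ℝ)
    (hform : ∀ f : E d → ℝ, ContDiff ℝ 1 f → MemLp f 2 volume →
      MemLp (fun x => gradient f x) 2 volume →
      (∫⁻ x, ENNReal.ofReal (‖b x‖ ^ 2 * f x ^ 2))
        ≤ ENNReal.ofReal (β * (∫ x, ‖gradient f x‖ ^ 2) + c * ∫ x, f x ^ 2)) :
    ∀ t > (0 : ℝ), ∀ x : E d,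
      heatSem d t (bsq d b) x ≤ ENNReal.ofReal (β * d / (8 * t) + c) := by
  intro t ht x
  have hkernel : ∀ y, gaussK d 1 t (x - y) = gaussKSqrt d 1 t (y - x) ^ 2 := fun y => by
    rw [gaussKSqrt_sq one_pos ht, gaussK, gaussK, norm_sub_rev]
  calc heatSem d t (bsq d b) x
      = ∫⁻ y, ENNReal.ofReal (‖b y‖ ^ 2 * gaussKSqrt d 1 t (y - x) ^ 2) := by
        simp only [heatSem, bsq, hkernel, ← ENNReal.ofReal_mul (sq_nonneg _), mul_comm]
    _ ≤ ENNReal.ofReal (β * (∫ y, ‖gradient (gaussKSqrt d 1 t) y‖ ^ 2)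
          + c * ∫ y, gaussKSqrt d 1 t y ^ 2) :=
        IsFormBounded.lintegral_comp_sub_le hform contDiff_gaussKSqrt (memLp_gaussKSqrt one_pos ht)
          (memLp_gradient_gaussKSqrt one_pos ht) x
    _ = ENNReal.ofReal (β * d / (8 * t) + c) := by
        rw [integral_norm_gradient_gaussKSqrt_sq one_pos ht, integral_gaussKSqrt_sq one_pos ht]
        congr 1
        ring

/-- If `b` is form-bounded with respect to `−Δ`, i.e.
`∫ |b|² f² ≤ β ∫ |∇f|² + c ∫ f²` for every `f ∈ W^{1,2}`, then
`e^{tΔ}|b|²(x) ≤ βd/(8t) + c` for every `t > 0` and `x`. -/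
theorem heat_of_form_bounded (d : ℕ) (hd : 1 ≤ d) (b : E d → E d) (hb : Measurable b)
    (β c : ℝ) (hβ : 0 < β) (hc : 0 ≤ c)
    (hform : ∀ f : E d → ℝ, ContDiff ℝ 1 f → MemLp f 2 volume →
      MemLp (fun x => gradient f x) 2 volume →
      (∫⁻ x, ENNReal.ofReal (‖b x‖ ^ 2 * f x ^ 2))
        ≤ ENNReal.ofReal (β * (∫ x, ‖gradient f x‖ ^ 2) + c * ∫ x, f x ^ 2)) :
    ∀ t > (0 : ℝ), ∀ x : E d,
      heatSem d t (bsq d b) x ≤ ENNReal.ofReal (β * d / (8 * t) + c) :=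
  heat_of_form_bounded_general d b β c hform
end
end

section
/- Let d ≥ 3 and let 1/d < α ≤ 1. Define b : ℝ^d → [0,∞) by b(x) = 1_{B(0,e^{-1})}(x) · |x|^{-1} · |log|x||^{-α}. Then b ∈ L^d(ℝ^d), but κ_{d+1}(b,h) = ∞ for every h > 0. In particular, L^d(ℝ^d) is not contained in the Kato class K^{d+1}. -/
/-!
In polar coordinates `∫ b^d` becomes `∫_0^{1/e} r⁻¹ |log r|^{-αd} dr`, which the substitution
`r = e^{-u}` turns into `∫_1^∞ u^{-αd} du < ∞`, as `αd > 1`. For the Kato norm look at `x = 0`: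
on the annulus `√t ≤ |y| < 2√t` the heat kernel is at least `(4πt)^{-d/2} e⁻¹` and
`b ≥ (2√t)⁻¹ |log t|^{-α} ≥ (2√t)⁻¹ |log t|⁻¹`, so `e^{tΔ}b(0) t^{-1/2} ≳ 1/(t |log t|)`, whose
integral diverges at `t = 0` by the same substitution.
-/

open MeasureTheory ENNReal

noncomputable section

/-- The Kato norm `κ_{d+1}(b,h)` of a scalar nonnegative function `b`. -/
def katoNormScalar (d : ℕ) (b : E d → ℝ) (h : ℝ) : ℝ≥0∞ :=
  ⨆ x : E d, ∫⁻ t in Set.Ioc (0 : ℝ) h,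
    heatSem d t (fun y => ENNReal.ofReal (b y)) x * ENNReal.ofReal (t ^ (-(1 : ℝ) / 2))

open Set Metric Module Real

theorem image_exp_neg_Ioi (a : ℝ) : (fun u : ℝ => exp (-u)) '' Ioi a = Ioo 0 (exp (-a)) := by
  ext r
  constructor
  · rintro ⟨u, hu, rfl⟩
    exact ⟨exp_pos _, exp_lt_exp.2 (neg_lt_neg hu)⟩
  · rintro ⟨hr0, hr⟩
    refine ⟨-log r, ?_, by simp [exp_log hr0]⟩
    exact lt_neg.1 ((log_lt_iff_lt_exp hr0).2 hr)

theorem integrableOn_inv_smul_comp_neg_log_iff {F : Type*} [NormedAddCommGroup F]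
    [NormedSpace ℝ F] (a : ℝ) (g : ℝ → F) :
    IntegrableOn (fun r : ℝ => r⁻¹ • g (-log r)) (Ioo 0 (exp (-a))) ↔ IntegrableOn g (Ioi a) := by
  rw [← image_exp_neg_Ioi, integrableOn_image_iff_integrableOn_abs_deriv_smul measurableSet_Ioi
    (fun u _ => ((hasDerivAt_neg u).exp).hasDerivWithinAt)
    (exp_injective.comp neg_injective).injOn]
  refine integrableOn_congr_fun (fun u _ => ?_) measurableSet_Ioi
  simp [abs_of_pos (exp_pos _), smul_smul]

theorem integrableOn_inv_mul_neg_log_rpow {β : ℝ} (hβ : 1 < β) :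
    IntegrableOn (fun r : ℝ => r⁻¹ * (-log r) ^ (-β)) (Ioo 0 (exp (-1))) :=
  (integrableOn_inv_smul_comp_neg_log_iff 1 (· ^ (-β))).2
    (integrableOn_Ioi_rpow_of_lt (by linarith) one_pos)

theorem lintegral_inv_mul_neg_log_inv_eq_top {a : ℝ} (ha : 0 ≤ a) :
    ∫⁻ r in Ioo 0 (exp (-a)), ENNReal.ofReal (r⁻¹ * (-log r)⁻¹) = ⊤ := by
  have hnonneg : ∀ r ∈ Ioo 0 (exp (-a)), 0 ≤ r⁻¹ * (-log r)⁻¹ := fun r hr => by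
    have : 0 < -log r := neg_pos.2 (log_neg hr.1 (hr.2.trans_le (exp_le_one_iff.2 (by linarith))))
    have := hr.1
    positivity
  by_contra hfin
  refine not_integrableOn_Ioi_inv ((integrableOn_inv_smul_comp_neg_log_iff a (·⁻¹)).1 ⟨?_, ?_⟩)
  · fun_prop
  · exact (hasFiniteIntegral_iff_ofReal ((ae_restrict_iff' measurableSet_Ioo).2
      (.of_forall hnonneg))).2 (lt_top_iff_ne_top.2 hfin)

def logCorrectedInvNorm {V : Type*} [NormedAddCommGroup V] (α : ℝ) : V → ℝ :=
  (ball 0 (exp (-1))).indicator fun x => ‖x‖⁻¹ * |log ‖x‖| ^ (-α)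

theorem pow_pred_mul_abs_inv_mul_abs_log_rpow {n : ℕ} (hn : 0 < n) {α r : ℝ} (hr0 : 0 < r)
    (hr1 : r < 1) :
    r ^ (n - 1) * |r⁻¹ * |log r| ^ (-α)| ^ (n : ℝ) = r⁻¹ * (-log r) ^ (-(α * n)) := by
  obtain ⟨m, rfl⟩ : ∃ m, n = m + 1 := ⟨n - 1, by omega⟩
  have hlog : |log r| = -log r := abs_of_neg (log_neg hr0 hr1)
  have hL : 0 < -log r := neg_pos.2 (log_neg hr0 hr1)
  rw [hlog, abs_of_nonneg (by positivity), mul_rpow (by positivity) (by positivity),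
    ← rpow_mul hL.le, Real.rpow_natCast, neg_mul, Nat.add_sub_cancel, inv_pow, pow_succ]
  field_simp

theorem memLp_logCorrectedInvNorm {V : Type*} [NormedAddCommGroup V] [NormedSpace ℝ V]
    [MeasurableSpace V] [BorelSpace V] [FiniteDimensional ℝ V] (μ : Measure V)
    [μ.IsAddHaarMeasure] {α : ℝ} (hα : 1 < α * finrank ℝ V) :
    MemLp (logCorrectedInvNorm α) (finrank ℝ V) μ := by
  set n := finrank ℝ V
  have hn : 0 < n := Nat.pos_of_ne_zero fun h => by simp [h] at hα; linarith
  have : Nontrivial V := Module.nontrivial_of_finrank_pos hn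
  have hmeas : Measurable (logCorrectedInvNorm (V := V) α) :=
    (by fun_prop : Measurable fun x : V => ‖x‖⁻¹ * |log ‖x‖| ^ (-α)).indicator measurableSet_ball
  rw [← integrable_norm_rpow_iff hmeas.aestronglyMeasurable (by simp [hn.ne']) (by simp),
    ENNReal.toReal_natCast]
  have hpow : (fun x => ‖logCorrectedInvNorm α x‖ ^ (n : ℝ)) = (ball (0 : V) (exp (-1))).indicator
      fun x => |‖x‖⁻¹ * |log ‖x‖| ^ (-α)| ^ (n : ℝ) := by
    ext x
    by_cases hx : x ∈ ball (0 : V) (exp (-1)) <;>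
      simp [logCorrectedInvNorm, hx, zero_rpow (Nat.cast_ne_zero.2 hn.ne')]
  rw [hpow, integrable_indicator_iff measurableSet_ball, integrableOn_fun_norm_addHaar μ
    (f := fun r => |r⁻¹ * |log r| ^ (-α)| ^ (n : ℝ))]
  refine (integrableOn_inv_mul_neg_log_rpow hα).congr_fun (fun r hr => ?_) measurableSet_Ioo
  rw [smul_eq_mul, pow_pred_mul_abs_inv_mul_abs_log_rpow hn hr.1
    (hr.2.trans (exp_lt_one_iff.2 (by norm_num)))]

theorem gaussK_one_ge {d : ℕ} {t : ℝ} (ht : 0 < t) {x : E d} (hx : ‖x‖ ^ 2 ≤ 4 * t) :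
    (4 * π * t) ^ (-(d : ℝ) / 2) * exp (-1) ≤ gaussK d 1 t x := by
  rw [gaussK, mul_one]
  gcongr
  rw [neg_div, neg_le_neg_iff, div_le_one (by positivity)]
  linarith

theorem addHaar_ball_two_mul_diff_ball {V : Type*} [NormedAddCommGroup V] [NormedSpace ℝ V]
    [MeasurableSpace V] [BorelSpace V] [FiniteDimensional ℝ V] (μ : Measure V)
    [μ.IsAddHaarMeasure] (x : V) {r : ℝ} (hr : 0 < r) :
    μ (ball x (2 * r) \ ball x r) =
      ENNReal.ofReal ((2 ^ finrank ℝ V - 1) * r ^ finrank ℝ V) * μ (ball 0 1) := by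
  have h2r : r ^ finrank ℝ V ≤ (2 * r) ^ finrank ℝ V := by gcongr; linarith
  rw [measure_sdiff (ball_subset_ball (by linarith)) measurableSet_ball.nullMeasurableSet
      measure_ball_lt_top.ne, Measure.addHaar_ball_of_pos μ x (by positivity),
    Measure.addHaar_ball_of_pos μ x hr,
    ← ENNReal.sub_mul (fun _ _ => measure_ball_lt_top.ne), ← ENNReal.ofReal_sub _ (by positivity)]
  congr 2
  ring

theorem mul_volume_le_heatSem {d : ℕ} {t : ℝ} {g : E d → ℝ≥0∞} {x : E d} {A : Set (E d)}
    {c : ℝ≥0∞} (hA : MeasurableSet A)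
    (hc : ∀ y ∈ A, c ≤ ENNReal.ofReal (gaussK d 1 t (x - y)) * g y) :
    c * volume A ≤ heatSem d t g x :=
  calc c * volume A = ∫⁻ _ in A, c := (setLIntegral_const _ _).symm
    _ ≤ ∫⁻ y in A, ENNReal.ofReal (gaussK d 1 t (x - y)) * g y := setLIntegral_mono' hA hc
    _ ≤ heatSem d t g x := setLIntegral_le_lintegral _ _

theorem inv_two_sqrt_mul_inv_neg_log_le_logCorrectedInvNorm {V : Type*} [NormedAddCommGroup V]
    {α : ℝ} (hα0 : 0 ≤ α) (hα1 : α ≤ 1) {t : ℝ} (ht0 : 0 < t) (ht : t ≤ exp (-4)) {y : V}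
    (hy : √t ≤ ‖y‖) (hy' : ‖y‖ < 2 * √t) :
    (2 * √t)⁻¹ * (-log t)⁻¹ ≤ logCorrectedInvNorm α y := by
  have hs0 : 0 < √t := sqrt_pos.2 ht0
  have hs : √t ≤ exp (-2) := by
    calc √t ≤ √(exp (-2) ^ 2) := by rw [← exp_nat_mul]; norm_num; exact sqrt_le_sqrt ht
      _ = exp (-2) := sqrt_sq (exp_pos _).le
  have hy_ball : ‖y‖ < exp (-1) := by
    have : 2 * exp (-2) < exp (-1) := by
      rw [show (-1 : ℝ) = 1 + -2 by norm_num, exp_add]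
      exact mul_lt_mul_of_pos_right (lt_trans (by norm_num) exp_one_gt_d9) (exp_pos _)
    linarith
  have hy0 : 0 < ‖y‖ := hs0.trans_le hy
  have hy1 : ‖y‖ < 1 := hy_ball.trans (exp_lt_one_iff.2 (by norm_num))
  have hlog_t : 4 ≤ -log t := by
    have := log_le_log ht0 ht
    rw [log_exp] at this
    linarith
  have hlog_y : 0 < -log ‖y‖ := neg_pos.2 (log_neg hy0 hy1)
  have hlog_le : -log ‖y‖ ≤ -log t := by
    have := log_le_log hs0 hy
    rw [log_sqrt ht0.le] at this
    linarith
  rw [logCorrectedInvNorm, indicator_of_mem (mem_ball_zero_iff.2 hy_ball),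
    abs_of_neg (log_neg hy0 hy1)]
  gcongr
  calc (-log t)⁻¹ = (-log t) ^ (-1 : ℝ) := (Real.rpow_neg_one _).symm
    _ ≤ (-log t) ^ (-α) := rpow_le_rpow_of_exponent_le (by linarith) (by linarith)
    _ ≤ (-log ‖y‖) ^ (-α) := rpow_le_rpow_of_nonpos hlog_y hlog_le (by linarith)

theorem heatKernel_annulus_scaling {d : ℕ} {t : ℝ} (ht : 0 < t) (L : ℝ) :
    (4 * π * t) ^ (-(d : ℝ) / 2) * exp (-1) * ((2 * √t)⁻¹ * L⁻¹) * ((2 ^ d - 1) * √t ^ d) *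
        t ^ (-(1 : ℝ) / 2) =
      (4 * π) ^ (-(d : ℝ) / 2) * exp (-1) * (2 ^ d - 1) / 2 * (t⁻¹ * L⁻¹) := by
  have hs : √t = t ^ (1 / 2 : ℝ) := sqrt_eq_rpow t
  have hs0 : 0 < √t := sqrt_pos.2 ht
  have hscale : (4 * π * t) ^ (-(d : ℝ) / 2) * √t ^ d = (4 * π) ^ (-(d : ℝ) / 2) := by
    rw [mul_rpow (by positivity) ht.le, hs, ← Real.rpow_natCast, ← rpow_mul ht.le, mul_assoc,
      ← rpow_add ht]
    ring_nf
    simp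
  have hhalf : t ^ (-(1 : ℝ) / 2) = (√t)⁻¹ := by
    rw [hs, ← rpow_neg ht.le]
    norm_num
  calc _ = (4 * π * t) ^ (-(d : ℝ) / 2) * √t ^ d * exp (-1) * (2 ^ d - 1) / 2 *
        ((√t ^ 2)⁻¹ * L⁻¹) := by
        rw [hhalf]
        field_simp
    _ = _ := by rw [hscale, sq_sqrt ht.le]

theorem le_heatSem_logCorrectedInvNorm_mul {d : ℕ} {α : ℝ} (hα0 : 0 ≤ α) (hα1 : α ≤ 1) {t : ℝ}
    (ht0 : 0 < t) (ht : t ≤ exp (-4)) :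
    ENNReal.ofReal ((4 * π) ^ (-(d : ℝ) / 2) * exp (-1) * (2 ^ d - 1) / 2) *
        volume (ball (0 : E d) 1) * ENNReal.ofReal (t⁻¹ * (-log t)⁻¹) ≤
      heatSem d t (fun y => ENNReal.ofReal (logCorrectedInvNorm α y)) 0 *
        ENNReal.ofReal (t ^ (-(1 : ℝ) / 2)) := by
  have hs0 : 0 < √t := sqrt_pos.2 ht0
  have hlog : 0 < -log t := neg_pos.2 (log_neg ht0 (ht.trans_lt (exp_lt_one_iff.2 (by norm_num))))
  have h2d : (0 : ℝ) ≤ 2 ^ d - 1 := sub_nonneg.2 (one_le_pow₀ (by norm_num))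
  have hκ : 0 ≤ (4 * π) ^ (-(d : ℝ) / 2) * exp (-1) * (2 ^ d - 1) / 2 := by positivity
  have hK : 0 ≤ (4 * π * t) ^ (-(d : ℝ) / 2) * exp (-1) * ((2 * √t)⁻¹ * (-log t)⁻¹) := by
    positivity
  set K := (4 * π * t) ^ (-(d : ℝ) / 2) * exp (-1) * ((2 * √t)⁻¹ * (-log t)⁻¹)
  have hheat : ENNReal.ofReal K * volume (ball (0 : E d) (2 * √t) \ ball 0 √t) ≤
      heatSem d t (fun y => ENNReal.ofReal (logCorrectedInvNorm α y)) 0 := by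
    refine mul_volume_le_heatSem (measurableSet_ball.diff measurableSet_ball) fun y hy => ?_
    have hy_in : ‖y‖ < 2 * √t := mem_ball_zero_iff.1 hy.1
    have hy_out : √t ≤ ‖y‖ := not_lt.1 fun h => hy.2 (mem_ball_zero_iff.2 h)
    have hgauss := gaussK_one_ge (d := d) ht0 (x := 0 - y) (by
      rw [zero_sub, norm_neg, ← sq_sqrt ht0.le]
      nlinarith)
    have hg0 : 0 ≤ gaussK d 1 t (0 - y) := le_trans (by positivity) hgauss
    rw [← ENNReal.ofReal_mul hg0]
    exact ENNReal.ofReal_le_ofReal (mul_le_mul hgauss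
      (inv_two_sqrt_mul_inv_neg_log_le_logCorrectedInvNorm hα0 hα1 ht0 ht hy_out hy_in)
      (by positivity) hg0)
  calc _ = ENNReal.ofReal (K * ((2 ^ d - 1) * √t ^ d) * t ^ (-(1 : ℝ) / 2)) *
        volume (ball (0 : E d) 1) := by
        rw [mul_right_comm, ← ENNReal.ofReal_mul hκ, heatKernel_annulus_scaling ht0]
    _ = ENNReal.ofReal K * volume (ball (0 : E d) (2 * √t) \ ball 0 √t) *
        ENNReal.ofReal (t ^ (-(1 : ℝ) / 2)) := by
      rw [addHaar_ball_two_mul_diff_ball volume 0 hs0, finrank_euclideanSpace_fin,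
        ENNReal.ofReal_mul (by positivity), ENNReal.ofReal_mul hK]
      ring
    _ ≤ _ := by gcongr

theorem katoNormScalar_logCorrectedInvNorm_eq_top {d : ℕ} (hd : 0 < d) {α : ℝ} (hα0 : 0 ≤ α)
    (hα1 : α ≤ 1) {h : ℝ} (hh : 0 < h) :
    katoNormScalar d (logCorrectedInvNorm α) h = ⊤ := by
  set a := max 4 (-log h)
  have hah : exp (-a) ≤ h := by
    rw [← exp_log hh]
    exact exp_le_exp.2 (by linarith [le_max_right 4 (-log h)])
  have ha4 : exp (-a) ≤ exp (-4) := exp_le_exp.2 (by linarith [le_max_left 4 (-log h)])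
  have hC : ENNReal.ofReal ((4 * π) ^ (-(d : ℝ) / 2) * exp (-1) * (2 ^ d - 1) / 2) *
      volume (ball (0 : E d) 1) ≠ 0 := by
    have h2d : (1 : ℝ) < 2 ^ d := one_lt_pow₀ (by norm_num) hd.ne'
    have : Nonempty (Fin d) := ⟨⟨0, hd⟩⟩
    refine mul_ne_zero (ENNReal.ofReal_pos.2 ?_).ne' (measure_ball_pos _ _ one_pos).ne'
    have : (0 : ℝ) < 2 ^ d - 1 := by linarith
    positivity
  refine top_unique ?_
  calc ⊤ = _ * ∫⁻ t in Ioo 0 (exp (-a)), ENNReal.ofReal (t⁻¹ * (-log t)⁻¹) := by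
        rw [lintegral_inv_mul_neg_log_inv_eq_top (by positivity), ENNReal.mul_top hC]
    _ ≤ _ := lintegral_const_mul_le _ _
    _ ≤ ∫⁻ t in Ioo 0 (exp (-a)),
        heatSem d t (fun y => ENNReal.ofReal (logCorrectedInvNorm α y)) 0 *
          ENNReal.ofReal (t ^ (-(1 : ℝ) / 2)) :=
      setLIntegral_mono' measurableSet_Ioo fun t ht =>
        le_heatSem_logCorrectedInvNorm_mul hα0 hα1 ht.1 (ht.2.le.trans ha4)
    _ ≤ ∫⁻ t in Ioc 0 h,
        heatSem d t (fun y => ENNReal.ofReal (logCorrectedInvNorm α y)) 0 *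
          ENNReal.ofReal (t ^ (-(1 : ℝ) / 2)) :=
      lintegral_mono_set (Ioo_subset_Ioc_self.trans (Ioc_subset_Ioc_right hah))
    _ ≤ katoNormScalar d (logCorrectedInvNorm α) h :=
      le_iSup (fun x => ∫⁻ t in Ioc 0 h,
        heatSem d t (fun y => ENNReal.ofReal (logCorrectedInvNorm α y)) x *
          ENNReal.ofReal (t ^ (-(1 : ℝ) / 2))) 0

/-- For `d ≥ 3` and `1/d < α ≤ 1`, the function
`b(x) = 1_{B(0,e⁻¹)}(x) |x|⁻¹ |log|x||^{-α}` belongs to `L^d(ℝ^d)` but has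
`κ_{d+1}(b,h) = ∞` for every `h > 0`; in particular `L^d ⊄ K^{d+1}`. -/
theorem Ld_not_subset_Kato (d : ℕ) (hd : 3 ≤ d) (α : ℝ)
    (hα1 : 1 / (d : ℝ) < α) (hα2 : α ≤ 1)
    (b : E d → ℝ)
    (hbval : b = fun x : E d =>
      Set.indicator (Metric.ball (0 : E d) (Real.exp (-1)))
        (fun x => ‖x‖⁻¹ * (abs (Real.log ‖x‖)) ^ (-α)) x) :
    MemLp b (d : ℝ≥0∞) volume ∧ ∀ h > (0 : ℝ), katoNormScalar d b h = ⊤ := by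
  have hd0 : (0 : ℝ) < d := by exact_mod_cast (by omega : 0 < d)
  have hαd : 1 < α * d := (div_lt_iff₀ hd0).1 hα1
  have hα0 : 0 ≤ α := (lt_trans (by positivity) hα1).le
  have hb : b = logCorrectedInvNorm α := hbval
  subst hb
  refine ⟨?_, fun h hh => katoNormScalar_logCorrectedInvNorm_eq_top (by omega) hα0 hα2 hh⟩
  simpa using memLp_logCorrectedInvNorm (V := E d) volume (by simpa using hαd)
end
end

section
/- Let d ≥ 3, let p > 1 and let α satisfy 1/p ≤ α < 1. Define b : ℝ^d → [0,∞) by b(x) = 1_{B(0,1)}(x) · |x_1|^{-α}, where x = (x_1,…,x_d). Then κ_{d+1}(b,h) < ∞ for every h > 0 (so b belongs to the Kato class K^{d+1}), while ∫_{B(0,1)} b(x)^p dx = ∞ (so b ∉ L^p_loc(ℝ^d)). -/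
/-!
The heat kernel factorises into one-dimensional Gaussians of variance `2t`, so `e^{tΔ}|x₁|^{-α}`
is a one-dimensional Gaussian average of `|s|^{-α}`. Splitting at `|s| = √t` bounds it by
`C t^{-α/2}`, and `t^{-α/2 - 1/2}` is integrable at `0` because `α < 1`. Conversely, the cube
`(-1/d, 1/d)^d` lies in the unit ball, and on it `∫ |x₁|^{-αp}` factorises into a divergent
one-dimensional integral because `αp ≥ 1`.
-/

open MeasureTheory ENNReal

noncomputable section

open ProbabilityTheory Set

theorem lintegral_comp_abs (g : ℝ → ℝ≥0∞) : ∫⁻ s, g |s| = 2 * ∫⁻ s in Ioi 0, g s := by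
  have h_pos : ∫⁻ s in Ioi 0, g |s| = ∫⁻ s in Ioi 0, g s :=
    setLIntegral_congr_fun measurableSet_Ioi fun s hs => by rw [abs_of_pos hs]
  have h_neg : ∫⁻ s in Iic 0, g |s| = ∫⁻ s in Ioi 0, g s := by
    rw [← (Measure.measurePreserving_neg volume).setLIntegral_comp_preimage_emb
      (Homeomorph.neg ℝ).measurableEmbedding, neg_preimage, neg_Iic, neg_zero,
      setLIntegral_congr Ioi_ae_eq_Ici.symm]
    exact setLIntegral_congr_fun measurableSet_Ioi fun s hs => by rw [abs_neg, abs_of_pos hs]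
  rw [← lintegral_add_compl _ measurableSet_Ioi, compl_Ioi, h_pos, h_neg, two_mul]

theorem lintegral_Ioc_rpow {β u : ℝ} (hβ : -1 < β) (hu : 0 ≤ u) :
    ∫⁻ s in Ioc 0 u, ENNReal.ofReal (s ^ β) = ENNReal.ofReal (u ^ (β + 1) / (β + 1)) := by
  rw [← ofReal_integral_eq_lintegral_ofReal
      ((intervalIntegrable_iff_integrableOn_Ioc_of_le hu).1
        (intervalIntegral.intervalIntegrable_rpow' hβ))
      ((ae_restrict_mem measurableSet_Ioc).mono fun s hs => Real.rpow_nonneg hs.1.le _),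
    ← intervalIntegral.integral_of_le hu, integral_rpow (Or.inl hβ),
    Real.zero_rpow (by linarith), sub_zero]

theorem lintegral_Ioo_rpow_eq_top {β u : ℝ} (hβ : β ≤ -1) (hu : 0 < u) :
    ∫⁻ s in Ioo 0 u, ENNReal.ofReal (s ^ β) = ⊤ := by
  by_contra hfin
  have : IntegrableOn (fun s : ℝ => s ^ β) (Ioo 0 u) :=
    ⟨(measurable_id.pow_const β).aestronglyMeasurable,
      (hasFiniteIntegral_iff_ofReal ((ae_restrict_mem measurableSet_Ioo).mono
        fun s hs => Real.rpow_nonneg hs.1.le _)).2 (lt_top_iff_ne_top.2 hfin)⟩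
  linarith [(intervalIntegral.integrableOn_Ioo_rpow_iff hu).1 this]

theorem lintegral_fin_prod_eq_prod {X : Type*} [MeasurableSpace X] (μ : Measure X) [SigmaFinite μ]
    {n : ℕ} (f : Fin n → X → ℝ≥0∞) (hf : ∀ i, Measurable (f i)) :
    ∫⁻ x, ∏ i, f i (x i) ∂Measure.pi (fun _ => μ) = ∏ i, ∫⁻ s, f i s ∂μ := by
  induction n with
  | zero => simp
  | succ n ih =>
    rw [← ((measurePreserving_piFinSuccAbove (fun _ : Fin (n + 1) => μ) 0).symm).lintegral_comp_emb
      (MeasurableEquiv.measurableEmbedding _)]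
    simp only [MeasurableEquiv.piFinSuccAbove_symm_apply, Fin.insertNthEquiv,
      Fin.insertNth_zero, Equiv.coe_fn_mk, Fin.zero_succAbove, Fin.cons_zero,
      Fin.cons_succ, Fin.prod_univ_succ, cast_eq]
    rw [lintegral_prod_mul (f := f 0) (g := fun w : Fin n → X => ∏ i, f i.succ (w i))
      (hf 0).aemeasurable
      (Finset.measurable_prod _ fun i _ => (hf i.succ).comp (measurable_pi_apply i)).aemeasurable,
      ih _ fun i => hf i.succ]

theorem lintegral_euclideanSpace_prod_mul_coord {n : ℕ} (φ : Fin n → ℝ → ℝ≥0∞)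
    (hφ : ∀ i, Measurable (φ i)) {g : ℝ → ℝ≥0∞} (hg : Measurable g) (i₀ : Fin n) :
    ∫⁻ y : EuclideanSpace ℝ (Fin n), (∏ i, φ i (y i)) * g (y i₀)
      = (∫⁻ s, φ i₀ s * g s) * ∏ i ∈ Finset.univ.erase i₀, ∫⁻ s, φ i s := by
  set f := Function.update φ i₀ (fun s => φ i₀ s * g s)
  have hf : ∀ i, Measurable (f i) := by
    intro i
    rcases eq_or_ne i i₀ with rfl | hi
    · simp only [f, Function.update_self]
      exact (hφ i).mul hg
    · simpa [f, hi] using hφ i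
  have h_erase : ∀ i ∈ Finset.univ.erase i₀, f i = φ i := fun i hi =>
    Function.update_of_ne (Finset.ne_of_mem_erase hi) _ _
  have h_prod : ∀ w : Fin n → ℝ, (∏ i, φ i (w i)) * g (w i₀) = ∏ i, f i (w i) := by
    intro w
    rw [← Finset.mul_prod_erase _ (fun i => f i (w i)) (Finset.mem_univ i₀),
      Finset.prod_congr rfl fun i hi => congrFun (h_erase i hi) (w i),
      ← Finset.mul_prod_erase _ (fun i => φ i (w i)) (Finset.mem_univ i₀)]
    simp only [f, Function.update_self]
    ring
  calc ∫⁻ y : EuclideanSpace ℝ (Fin n), (∏ i, φ i (y i)) * g (y i₀)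
      = ∫⁻ w : Fin n → ℝ, ∏ i, f i (w i) := by
        rw [← (EuclideanSpace.volume_preserving_symm_measurableEquiv_toLp (Fin n)).lintegral_comp
          (f := fun w : Fin n → ℝ => ∏ i, f i (w i))
          (Finset.measurable_prod _ fun i _ => (hf i).comp (measurable_pi_apply i))]
        exact lintegral_congr fun y => h_prod _
    _ = ∏ i, ∫⁻ s, f i s := by rw [volume_pi, lintegral_fin_prod_eq_prod volume f hf]
    _ = (∫⁻ s, φ i₀ s * g s) * ∏ i ∈ Finset.univ.erase i₀, ∫⁻ s, φ i s := by
        rw [← Finset.mul_prod_erase _ _ (Finset.mem_univ i₀),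
          Finset.prod_congr rfl fun i hi => by rw [h_erase i hi]]
        simp only [f, Function.update_self]

theorem gaussianPDFReal_le_inv_sqrt {t : ℝ} (ht : 0 ≤ t) (c s : ℝ) :
    gaussianPDFReal c (2 * t).toNNReal s ≤ (√t)⁻¹ := by
  rw [gaussianPDFReal, Real.coe_toNNReal _ (by positivity)]
  calc (√(2 * Real.pi * (2 * t)))⁻¹ * Real.exp (-(s - c) ^ 2 / (2 * (2 * t)))
      ≤ (√(2 * Real.pi * (2 * t)))⁻¹ := by
        refine mul_le_of_le_one_right (by positivity) (Real.exp_le_one_iff.2 ?_)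
        exact div_nonpos_of_nonpos_of_nonneg (neg_nonpos.2 (sq_nonneg _)) (by positivity)
    _ ≤ (√t)⁻¹ := by
        rcases ht.eq_or_lt with rfl | ht
        · simp
        refine inv_anti₀ (Real.sqrt_pos.2 ht) (Real.sqrt_le_sqrt ?_)
        nlinarith [Real.pi_gt_three]

theorem lintegral_gaussianPDFReal_mul_abs_rpow_neg_le {α t : ℝ} (hα0 : 0 ≤ α) (hα1 : α < 1)
    (ht : 0 < t) (c : ℝ) :
    ∫⁻ s, ENNReal.ofReal (gaussianPDFReal c (2 * t).toNNReal s) * ENNReal.ofReal (|s| ^ (-α))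
      ≤ ENNReal.ofReal ((2 / (1 - α) + 1) * t ^ (-α / 2)) := by
  set u := √t
  have hu : 0 < u := Real.sqrt_pos.2 ht
  have hu_rpow : ∀ γ : ℝ, u ^ γ = t ^ (γ / 2) := fun γ => by
    rw [show u = t ^ (1 / 2 : ℝ) from Real.sqrt_eq_rpow t, ← Real.rpow_mul ht.le]; ring_nf
  set ρ : ℝ → ℝ := gaussianPDFReal c (2 * t).toNNReal
  set G : ℝ → ℝ≥0∞ := (Iic u).indicator fun r => ENNReal.ofReal (r ^ (-α))
  have h_split : ∀ s, ENNReal.ofReal (ρ s) * ENNReal.ofReal (|s| ^ (-α))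
      ≤ ENNReal.ofReal (t ^ (-α / 2)) * ENNReal.ofReal (ρ s) + ENNReal.ofReal u⁻¹ * G |s| := by
    intro s
    rcases le_or_gt |s| u with h_near | h_far
    · refine le_add_left ?_
      rw [show G |s| = ENNReal.ofReal (|s| ^ (-α)) from
        Set.indicator_of_mem (show |s| ∈ Iic u from h_near) _]
      exact mul_le_mul_left (ENNReal.ofReal_le_ofReal (gaussianPDFReal_le_inv_sqrt ht.le c s)) _
    · refine le_add_right ?_
      rw [mul_comm]
      refine mul_le_mul_left (ENNReal.ofReal_le_ofReal ?_) _
      rw [← hu_rpow]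
      exact Real.rpow_le_rpow_of_nonpos hu h_far.le (neg_nonpos.2 hα0)
  have h_near : ∫⁻ s, G |s| = ENNReal.ofReal (2 * (u ^ (1 - α) / (1 - α))) := by
    rw [lintegral_comp_abs, setLIntegral_indicator measurableSet_Iic, inter_comm, Ioi_inter_Iic,
      lintegral_Ioc_rpow (by linarith) hu.le, neg_add_eq_sub, ENNReal.ofReal_mul zero_le_two,
      ENNReal.ofReal_ofNat]
  have h_exp : u⁻¹ * u ^ (1 - α) = t ^ (-α / 2) := by
    rw [← Real.rpow_neg_one, ← Real.rpow_add hu, hu_rpow]; ring_nf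
  calc ∫⁻ s, ENNReal.ofReal (ρ s) * ENNReal.ofReal (|s| ^ (-α))
      ≤ ∫⁻ s, (ENNReal.ofReal (t ^ (-α / 2)) * ENNReal.ofReal (ρ s) + ENNReal.ofReal u⁻¹ * G |s|) :=
        lintegral_mono h_split
    _ = ENNReal.ofReal (t ^ (-α / 2))
          + ENNReal.ofReal u⁻¹ * ENNReal.ofReal (2 * (u ^ (1 - α) / (1 - α))) := by
        rw [lintegral_add_left ((measurable_gaussianPDFReal _ _).ennreal_ofReal.const_mul _),
          lintegral_const_mul _ (measurable_gaussianPDFReal _ _).ennreal_ofReal,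
          lintegral_gaussianPDFReal_eq_one _ (by simpa using ht), mul_one,
          lintegral_const_mul' _ _ ofReal_ne_top, h_near]
    _ = ENNReal.ofReal ((2 / (1 - α) + 1) * t ^ (-α / 2)) := by
        have h1α : 1 - α ≠ 0 := by linarith
        rw [← ENNReal.ofReal_mul (by positivity),
          ← ENNReal.ofReal_add (by positivity) (by positivity)]
        congr 1
        rw [← h_exp]
        field_simp
        ring

theorem gaussK_one_sub_eq_prod {d : ℕ} {t : ℝ} (ht : 0 < t) (x y : E d) :
    gaussK d 1 t (x - y) = ∏ i, gaussianPDFReal (x i) (2 * t).toNNReal (y i) := by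
  simp only [gaussK, gaussianPDFReal]
  rw [EuclideanSpace.real_norm_sq_eq,
    Finset.prod_mul_distrib, Finset.prod_const, Finset.card_univ, Fintype.card_fin,
    ← Real.exp_sum, Real.coe_toNNReal _ (by positivity)]
  congr 1
  · rw [show 2 * Real.pi * (2 * t) = 4 * Real.pi * 1 * t by ring, Real.sqrt_eq_rpow,
      ← Real.rpow_neg (by positivity), ← Real.rpow_mul_natCast (by positivity)]
    ring_nf
  · rw [neg_div, Finset.sum_div, ← Finset.sum_neg_distrib]
    exact congrArg Real.exp (Finset.sum_congr rfl fun i _ => by simp only [PiLp.sub_apply]; ring)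

theorem heatSem_mono {d : ℕ} {t : ℝ} {g g' : E d → ℝ≥0∞} (hg : g ≤ g') (x : E d) :
    heatSem d t g x ≤ heatSem d t g' x :=
  lintegral_mono fun y => mul_le_mul_right (hg y) _

theorem heatSem_abs_coord_rpow_neg_le {d : ℕ} (i₀ : Fin d) {α t : ℝ} (hα0 : 0 ≤ α)
    (hα1 : α < 1) (ht : 0 < t) (x : E d) :
    heatSem d t (fun y => ENNReal.ofReal (|y i₀| ^ (-α))) x
      ≤ ENNReal.ofReal ((2 / (1 - α) + 1) * t ^ (-α / 2)) := by
  have hρ : ∀ i, Measurable fun s => ENNReal.ofReal (gaussianPDFReal (x i) (2 * t).toNNReal s) :=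
    fun i => (measurable_gaussianPDFReal _ _).ennreal_ofReal
  simp only [heatSem, gaussK_one_sub_eq_prod ht,
    ENNReal.ofReal_prod_of_nonneg fun i _ => gaussianPDFReal_nonneg _ _ _]
  rw [lintegral_euclideanSpace_prod_mul_coord _ hρ
      (measurable_abs.pow_const _).ennreal_ofReal i₀,
    Finset.prod_eq_one fun i _ => lintegral_gaussianPDFReal_eq_one _ (by simpa using ht), mul_one]
  exact lintegral_gaussianPDFReal_mul_abs_rpow_neg_le hα0 hα1 ht _

theorem katoNormScalar_lt_top_of_heatSem_le {d : ℕ} {b : E d → ℝ} {h β C : ℝ} (hh : 0 < h)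
    (hβ : β < 1 / 2)
    (hb : ∀ t ∈ Ioc 0 h, ∀ x,
      heatSem d t (fun y => ENNReal.ofReal (b y)) x ≤ ENNReal.ofReal (C * t ^ (-β))) :
    katoNormScalar d b h < ⊤ := by
  calc katoNormScalar d b h
      ≤ ENNReal.ofReal C * ENNReal.ofReal (h ^ (-(β + 1 / 2) + 1) / (-(β + 1 / 2) + 1)) :=
        iSup_le fun x => ?_
    _ < ⊤ := ENNReal.mul_lt_top ofReal_lt_top ofReal_lt_top
  calc ∫⁻ t in Ioc 0 h,
        heatSem d t (fun y => ENNReal.ofReal (b y)) x * ENNReal.ofReal (t ^ (-1 / 2 : ℝ))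
      ≤ ∫⁻ t in Ioc 0 h, ENNReal.ofReal C * ENNReal.ofReal (t ^ (-(β + 1 / 2))) := by
        refine setLIntegral_mono (by fun_prop) fun t ht => ?_
        calc heatSem d t (fun y => ENNReal.ofReal (b y)) x * ENNReal.ofReal (t ^ (-1 / 2 : ℝ))
            ≤ ENNReal.ofReal (C * t ^ (-β)) * ENNReal.ofReal (t ^ (-1 / 2 : ℝ)) :=
              mul_le_mul_left (hb t ht x) _
          _ = ENNReal.ofReal C * ENNReal.ofReal (t ^ (-(β + 1 / 2))) := by
              rw [ENNReal.ofReal_mul' (Real.rpow_nonneg ht.1.le _), mul_assoc,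
                ← ENNReal.ofReal_mul (Real.rpow_nonneg ht.1.le _), ← Real.rpow_add ht.1]
              ring_nf
    _ = ENNReal.ofReal C * ENNReal.ofReal (h ^ (-(β + 1 / 2) + 1) / (-(β + 1 / 2) + 1)) := by
        rw [lintegral_const_mul _ (by fun_prop), lintegral_Ioc_rpow (by linarith) hh.le]

theorem norm_lt_one_of_forall_abs_lt_inv {d : ℕ} (hd : 0 < d) (y : E d)
    (hy : ∀ i, |y i| < (d : ℝ)⁻¹) : ‖y‖ < 1 := by
  have : Nonempty (Fin d) := ⟨⟨0, hd⟩⟩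
  have hd' : (1 : ℝ) ≤ d := by exact_mod_cast hd
  refine (sq_lt_one_iff₀ (norm_nonneg y)).1 ?_
  calc ‖y‖ ^ 2 = ∑ i, |y i| ^ 2 := by simp [EuclideanSpace.real_norm_sq_eq]
    _ < ∑ _i : Fin d, ((d : ℝ)⁻¹) ^ 2 :=
        Finset.sum_lt_sum_of_nonempty Finset.univ_nonempty fun i _ =>
          pow_lt_pow_left₀ (hy i) (abs_nonneg _) two_ne_zero
    _ = (d : ℝ)⁻¹ := by simp [sq]; field_simp
    _ ≤ 1 := inv_le_one_of_one_le₀ hd'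

theorem setLIntegral_ball_abs_coord_rpow_neg_eq_top {d : ℕ} (i₀ : Fin d) {q : ℝ} (hq : 1 ≤ q) :
    ∫⁻ y in Metric.ball (0 : E d) 1, ENNReal.ofReal (|y i₀| ^ (-q)) = ⊤ := by
  have hd : 0 < d := i₀.pos
  set r : ℝ := (d : ℝ)⁻¹
  have hr : 0 < r := by positivity
  set φ : ℝ → ℝ≥0∞ := (Ioo (-r) r).indicator 1
  set g : ℝ → ℝ≥0∞ := fun s => ENNReal.ofReal (|s| ^ (-q))
  have hg : Measurable g := (measurable_abs.pow_const _).ennreal_ofReal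
  have h_axis : ∫⁻ s, φ s * g s = ⊤ := by
    simp only [φ, ← indicator_mul_left, Pi.one_apply, one_mul]
    rw [lintegral_indicator measurableSet_Ioo, eq_top_iff,
      ← lintegral_Ioo_rpow_eq_top (by linarith : -q ≤ -1) hr]
    calc ∫⁻ s in Ioo 0 r, ENNReal.ofReal (s ^ (-q))
        = ∫⁻ s in Ioo 0 r, g s :=
          setLIntegral_congr_fun measurableSet_Ioo fun s hs => by simp [g, abs_of_pos hs.1]
      _ ≤ ∫⁻ s in Ioo (-r) r, g s := lintegral_mono_set (Ioo_subset_Ioo (by linarith) le_rfl)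
  have h_side : ∫⁻ s, φ s ≠ 0 := by
    simp [φ, lintegral_indicator_one measurableSet_Ioo, hr]
  have h_cube : ∀ y : E d,
      (∏ _i, φ (y _i)) * g (y i₀) ≤ (Metric.ball 0 1).indicator (fun y => g (y i₀)) y := by
    intro y
    by_cases hy : ∀ i, y i ∈ Ioo (-r) r
    · have : y ∈ Metric.ball (0 : E d) 1 := mem_ball_zero_iff.2
        (norm_lt_one_of_forall_abs_lt_inv hd y fun i => abs_lt.2 (hy i))
      rw [indicator_of_mem this]
      refine mul_le_of_le_one_left' (Finset.prod_le_one' fun i _ => ?_)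
      exact indicator_le_self _ _ (y i)
    · obtain ⟨i, hi⟩ := not_forall.1 hy
      rw [Finset.prod_eq_zero (Finset.mem_univ i) (indicator_of_notMem hi _), zero_mul]
      exact zero_le
  rw [eq_top_iff, ← lintegral_indicator measurableSet_ball]
  calc ⊤ = (∫⁻ s, φ s * g s) * ∏ i ∈ Finset.univ.erase i₀, ∫⁻ s, φ s := by
        rw [h_axis, ENNReal.top_mul (Finset.prod_ne_zero_iff.2 fun _ _ => h_side)]
    _ = ∫⁻ y : E d, (∏ _i, φ (y _i)) * g (y i₀) :=
        (lintegral_euclideanSpace_prod_mul_coord (fun _ => φ)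
          (fun _ => measurable_one.indicator measurableSet_Ioo) hg i₀).symm
    _ ≤ _ := lintegral_mono h_cube

/-- For `d ≥ 3`, `p > 1` and `1/p ≤ α < 1`, the function
`b(x) = 1_{B(0,1)}(x) |x₁|^{-α}` has `κ_{d+1}(b,h) < ∞` for every `h > 0`
(so `b ∈ K^{d+1}`), but `∫_{B(0,1)} b^p dx = ∞` (so `b ∉ L^p_loc`). -/
theorem Kato_not_subset_Lp (d : ℕ) (hd : 3 ≤ d) (p α : ℝ)
    (hp : 1 < p) (hα1 : 1 / p ≤ α) (hα2 : α < 1)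
    (b : E d → ℝ)
    (hbval : b = fun x : E d =>
      Set.indicator (Metric.ball (0 : E d) 1)
        (fun x => (abs (x ⟨0, by omega⟩)) ^ (-α)) x) :
    (∀ h > (0 : ℝ), katoNormScalar d b h < ⊤) ∧
      ∫⁻ x in Metric.ball (0 : E d) 1, ENNReal.ofReal (b x ^ p) = ⊤ := by
  set i₀ : Fin d := ⟨0, by omega⟩
  have hα0 : 0 < α := lt_of_lt_of_le (by positivity) hα1
  subst hbval
  constructor
  · intro h hh
    refine katoNormScalar_lt_top_of_heatSem_le hh (β := α / 2) (C := 2 / (1 - α) + 1)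
      (by linarith) fun t ht x => ?_
    rw [← neg_div]
    refine le_trans (heatSem_mono (fun y => ENNReal.ofReal_le_ofReal ?_) x)
      (heatSem_abs_coord_rpow_neg_le i₀ hα0.le hα2 ht.1 x)
    exact indicator_apply_le' (fun _ => le_rfl) fun _ => Real.rpow_nonneg (abs_nonneg _) _
  · have hαp : 1 ≤ α * p := by rwa [div_le_iff₀ (by linarith)] at hα1
    rw [← setLIntegral_ball_abs_coord_rpow_neg_eq_top i₀ hαp]
    refine setLIntegral_congr_fun measurableSet_ball fun y hy => ?_
    dsimp only
    rw [indicator_of_mem hy, ← Real.rpow_mul (abs_nonneg _), neg_mul]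
end
end

section
/- Let d ≥ 1, let δ > 0 and h > 0, and let b : ℝ^d → ℝ^d be a measurable vector field with |b| ∈ L²_loc such that n_e(b, δh) < ∞. Then the localized Nash integrals vanish as the localization radius tends to infinity: lim_{R→∞} ∫_0^h t^{−1/2} sqrt( ∫_{|y| > R} k_δ(t,y) |b(y)|² dy ) dt = 0. -/
open MeasureTheory ENNReal

noncomputable section

/-
Dominated convergence in `t`. The integrand is dominated by its value with the full space in
place of `{|y| > R}`, namely `t^{-1/2} (e^{δtΔ}|b|²(0))^{1/2}`; substituting `s = δt`, its integral
over `(0,h]` is `δ^{-1/2}` times the Nash integral over `(0,δh]` at `x = 0`, hence finite. So for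
a.e. `t` the total mass `∫ k_δ(t,y)|b(y)|² dy` is finite and its tail outside the ball of radius
`R` vanishes as `R → ∞`.
-/

open Filter Topology Function Set

section Gaussian

variable {d : ℕ}

lemma measurable_gaussK_uncurry (μ : ℝ) : Measurable fun p : ℝ × E d => gaussK d μ p.1 p.2 := by
  unfold gaussK
  fun_prop

lemma gaussK_eq_gaussK_one_mul (μ t : ℝ) (x : E d) : gaussK d μ t x = gaussK d 1 (μ * t) x := by
  simp only [gaussK]
  ring_nf

lemma gaussK_neg (μ t : ℝ) (x : E d) : gaussK d μ t (-x) = gaussK d μ t x := by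
  simp only [gaussK, norm_neg]

lemma heatSem_mul_apply_zero (μ t : ℝ) (g : E d → ℝ≥0∞) :
    heatSem d (μ * t) g 0 = ∫⁻ y, ENNReal.ofReal (gaussK d μ t y) * g y := by
  refine lintegral_congr fun y => ?_
  rw [zero_sub, gaussK_neg, gaussK_eq_gaussK_one_mul μ t]

lemma setLIntegral_Ioc_comp_const_mul (G : ℝ → ℝ≥0∞) {c : ℝ} (hc : 0 < c) (a b : ℝ) :
    ∫⁻ t in Ioc a b, G (c * t) = ENNReal.ofReal c⁻¹ * ∫⁻ s in Ioc (c * a) (c * b), G s := by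
  have hmp : MeasurePreserving (c * ·) volume (ENNReal.ofReal |c⁻¹| • volume) :=
    ⟨measurable_const_mul c, Real.map_volume_mul_left hc.ne'⟩
  rw [hmp.setLIntegral_comp_emb (measurableEmbedding_mulLeft₀ hc.ne'), image_mul_left_Ioc hc,
    setLIntegral_smul_measure, abs_of_pos (inv_pos.2 hc), smul_eq_mul]

lemma lintegral_Ioc_sqrt_heatSem_mul_le_nashNorm (b : E d → E d) {δ : ℝ} (hδ : 0 < δ) (h : ℝ)
    (x : E d) :
    ∫⁻ t in Ioc 0 h,
        heatSem d (δ * t) (bsq d b) x ^ (1 / 2 : ℝ) * ENNReal.ofReal (t ^ (-(1 : ℝ) / 2))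
      ≤ ENNReal.ofReal (δ ^ (-(1 : ℝ) / 2)) * nashNorm d b (δ * h) := by
  set G : ℝ → ℝ≥0∞ := fun s => heatSem d s (bsq d b) x ^ (1 / 2 : ℝ) *
    ENNReal.ofReal (s ^ (-(1 : ℝ) / 2))
  have hscale : ∀ t ∈ Ioc 0 h, heatSem d (δ * t) (bsq d b) x ^ (1 / 2 : ℝ) *
      ENNReal.ofReal (t ^ (-(1 : ℝ) / 2)) = ENNReal.ofReal (δ ^ (1 / 2 : ℝ)) * G (δ * t) := by
    intro t ht
    have hpow : t ^ (-(1 : ℝ) / 2) = δ ^ (1 / 2 : ℝ) * (δ * t) ^ (-(1 : ℝ) / 2) := by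
      rw [Real.mul_rpow hδ.le ht.1.le, ← mul_assoc, ← Real.rpow_add hδ]
      norm_num
    rw [hpow, ENNReal.ofReal_mul (by positivity)]
    ring
  calc _ = ∫⁻ t in Ioc 0 h, ENNReal.ofReal (δ ^ (1 / 2 : ℝ)) * G (δ * t) :=
        setLIntegral_congr_fun measurableSet_Ioc hscale
    _ = ENNReal.ofReal (δ ^ (1 / 2 : ℝ)) * (ENNReal.ofReal δ⁻¹ * ∫⁻ s in Ioc 0 (δ * h), G s) := by
        rw [lintegral_const_mul' _ _ ENNReal.ofReal_ne_top, setLIntegral_Ioc_comp_const_mul G hδ,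
          mul_zero]
    _ = ENNReal.ofReal (δ ^ (-(1 : ℝ) / 2)) * ∫⁻ s in Ioc 0 (δ * h), G s := by
        rw [← mul_assoc, ← ENNReal.ofReal_mul (by positivity), ← Real.rpow_neg_one,
          ← Real.rpow_add hδ]
        norm_num
    _ ≤ _ := by
        gcongr
        exact le_iSup (fun x => ∫⁻ t in Ioc 0 (δ * h), heatSem d t (bsq d b) x ^ (1 / 2 : ℝ) *
          ENNReal.ofReal (t ^ (-(1 : ℝ) / 2))) x

end Gaussian

section Tail

variable {T α : Type*} [MeasurableSpace T] [SeminormedAddCommGroup α] [MeasurableSpace α]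
  [OpensMeasurableSpace α]

lemma tendsto_setLIntegral_norm_gt_atTop {μ : Measure α} {f : α → ℝ≥0∞}
    (hf : ∫⁻ y, f y ∂μ ≠ ∞) :
    Tendsto (fun R : ℝ => ∫⁻ y in {y | R < ‖y‖}, f y ∂μ) atTop (𝓝 0) := by
  have hS : ∀ R : ℝ, MeasurableSet {y : α | R < ‖y‖} := fun R =>
    measurableSet_lt measurable_const continuous_norm.measurable
  have hanti : Antitone fun R : ℝ => {y : α | R < ‖y‖} := fun R₁ R₂ hR y hy => hR.trans_lt hy
  have hempty : ⋂ R : ℝ, {y : α | R < ‖y‖} = ∅ :=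
    eq_empty_of_forall_notMem fun y hy => lt_irrefl ‖y‖ (mem_iInter.1 hy ‖y‖)
  have hlim := tendsto_measure_iInter_atTop (μ := μ.withDensity f)
    (fun R => (hS R).nullMeasurableSet) hanti
    ⟨0, by
      rw [withDensity_apply _ (hS 0)]
      exact ne_top_of_le_ne_top hf (setLIntegral_le_lintegral _ _)⟩
  rw [hempty, measure_empty] at hlim
  simpa only [comp_def, withDensity_apply _ (hS _)] using hlim

lemma tendsto_lintegral_rpow_setLIntegral_norm_gt_mul_atTop {ν : Measure T} {μ : Measure α}
    [SFinite μ] {F : T → α → ℝ≥0∞} (hF : Measurable (uncurry F)) {w : T → ℝ≥0∞}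
    (hw : Measurable w) (hw_top : ∀ t, w t ≠ ∞) (hw_zero : ∀ᵐ t ∂ν, w t ≠ 0) {p : ℝ}
    (hp : 0 < p) (hfin : ∫⁻ t, (∫⁻ y, F t y ∂μ) ^ p * w t ∂ν ≠ ∞) :
    Tendsto (fun R : ℝ => ∫⁻ t, (∫⁻ y in {y | R < ‖y‖}, F t y ∂μ) ^ p * w t ∂ν)
      atTop (𝓝 0) := by
  have hmeas : ∀ s : Set α, Measurable fun t => (∫⁻ y in s, F t y ∂μ) ^ p * w t := fun s =>
    ((hF.lintegral_prod_right' (ν := μ.restrict s)).pow_const p).mul hw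
  have hle : ∀ (R : ℝ) t, (∫⁻ y in {y | R < ‖y‖}, F t y ∂μ) ^ p * w t
      ≤ (∫⁻ y, F t y ∂μ) ^ p * w t := fun R t => by
    gcongr
    exact Measure.restrict_le_self
  have hF_fin : ∀ᵐ t ∂ν, ∫⁻ y, F t y ∂μ ≠ ∞ := by
    filter_upwards [ae_lt_top (by simpa using hmeas univ) hfin, hw_zero] with t ht hwt htop
    simp [htop, ENNReal.top_rpow_of_pos hp, ENNReal.top_mul hwt] at ht
  have hlim := tendsto_lintegral_filter_of_dominated_convergence (l := atTop) _
    (Eventually.of_forall fun R => hmeas _) (Eventually.of_forall fun R => ae_of_all _ (hle R))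
    hfin (f := fun _ => 0) ?_
  · simpa using hlim
  filter_upwards [hF_fin] with t ht
  have hrpow := ((ENNReal.continuous_rpow_const (y := p)).tendsto 0).comp
    (tendsto_setLIntegral_norm_gt_atTop ht)
  simpa [ENNReal.zero_rpow_of_pos hp] using ENNReal.Tendsto.mul_const hrpow (Or.inr (hw_top t))

end Tail

theorem localized_nash_vanishes_general (d : ℕ) (δ h : ℝ) (hδ : 0 < δ)
    (b : E d → E d) (hb : Measurable b)
    (hnash : nashNorm d b (δ * h) ≠ ⊤) :
    Filter.Tendsto (fun R : ℝ =>
        ∫⁻ t in Set.Ioc (0 : ℝ) h,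
          (∫⁻ y in {y : E d | R < ‖y‖},
              ENNReal.ofReal (gaussK d δ t y) * ENNReal.ofReal (‖b y‖ ^ 2)) ^ (1 / 2 : ℝ)
            * ENNReal.ofReal (t ^ (-(1 : ℝ) / 2)))
      Filter.atTop (nhds 0) := by
  have hfin := ne_top_of_le_ne_top (mul_ne_top ofReal_ne_top hnash)
    (lintegral_Ioc_sqrt_heatSem_mul_le_nashNorm b hδ h 0)
  simp only [heatSem_mul_apply_zero, bsq] at hfin
  refine tendsto_lintegral_rpow_setLIntegral_norm_gt_mul_atTop ?_ (by fun_prop)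
    (fun _ => ofReal_ne_top) ?_ (by norm_num) hfin
  · exact (measurable_gaussK_uncurry δ).ennreal_ofReal.mul
      ((hb.comp measurable_snd).norm.pow_const 2).ennreal_ofReal
  · filter_upwards [ae_restrict_mem measurableSet_Ioc] with t ht
    exact (ENNReal.ofReal_pos.2 (Real.rpow_pos_of_pos ht.1 _)).ne'

/-- If `n_e(b,δh) < ∞`, then the localized Nash integrals vanish as the
localization radius tends to infinity:
`lim_{R→∞} ∫₀^h t^{-1/2} sqrt(∫_{|y|>R} k_δ(t,y)|b(y)|² dy) dt = 0`. -/
theorem localized_nash_vanishes (d : ℕ) (hd : 1 ≤ d) (δ h : ℝ) (hδ : 0 < δ) (hh : 0 < h)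
    (b : E d → E d) (hb : Measurable b)
    (hb2 : LocallyIntegrable (fun x : E d => ‖b x‖ ^ 2) volume)
    (hnash : nashNorm d b (δ * h) ≠ ⊤) :
    Filter.Tendsto (fun R : ℝ =>
        ∫⁻ t in Set.Ioc (0 : ℝ) h,
          (∫⁻ y in {y : E d | R < ‖y‖},
              ENNReal.ofReal (gaussK d δ t y) * ENNReal.ofReal (‖b y‖ ^ 2)) ^ (1 / 2 : ℝ)
            * ENNReal.ofReal (t ^ (-(1 : ℝ) / 2)))
      Filter.atTop (nhds 0) :=
  localized_nash_vanishes_general d δ h hδ b hb hnash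
end
end
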